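/- arXiv:2412.13759 — 3 statements merged into one kernel-verified Lean document; each statement's English description precedes it below -/
import Mathlib

section
/- Let T be a topological space, let E₀ ⊆ T be a nonempty compact set, let {R_t}_{t=1}^N be an IRS on E₀, and let K := ⋂_{n=0}^∞ E_n be its attractor, where E_{n+1} := ⋃_{t=1}^N R_t(E_n). If {R_t}_{t=1}^N satisfies Condition (C), then K ⊆ ⋃_{t=1}^N R_t(K), and hence K = ⋃_{t=1}^N R_t(K). -/
open Set Filter

/-- The image of a set `F` under a relation `R` (viewed as a set-valued map):
`R(F) := ⋃_{x ∈ F} R(x)`. -/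
def relImage {T : Type*} (R : T → Set T) (F : Set T) : Set T := ⋃ x ∈ F, R x

/-- For an IRS `{R_t}_{t=1}^N` on a nonempty compact `E₀ ⊆ T` with
`E_{n+1} := ⋃_t R_t(E_n)` and attractor `K := ⋂_n E_n`, if Condition (C) holds then
`K ⊆ ⋃_t R_t(K)`, and hence `K = ⋃_t R_t(K)`. -/
theorem irs_attractor_invariance_of_conditionC
    {T : Type*} [TopologicalSpace T]
    {N : ℕ} (hN : 0 < N) (R : Fin N → T → Set T) (E₀ : Set T)
    (hE₀ne : E₀.Nonempty) (hE₀cpt : IsCompact E₀)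
    -- IRS condition (a)
    (hIRSa : ∀ F : Set T, F ⊆ E₀ → F.Nonempty → IsCompact F → ∀ t : Fin N,
      (relImage (R t) F).Nonempty ∧ IsCompact (relImage (R t) F))
    -- IRS condition (b)
    (hIRSb : ∀ t : Fin N, relImage (R t) E₀ ⊆ E₀)
    (E : ℕ → Set T) (hE0 : E 0 = E₀)
    (hEsucc : ∀ n : ℕ, E (n + 1) = ⋃ t : Fin N, relImage (R t) (E n))
    -- Condition (C)
    (hC : ∀ x ∈ E₀, ∀ l : Fin N, ∀ nk : ℕ → ℕ, StrictMono nk →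
      ∀ y : ℕ → T, (∀ k : ℕ, y k ∈ E (nk k)) → (∀ k : ℕ, x ∈ R l (y k)) →
      ∃ φ : ℕ → ℕ, StrictMono φ ∧ ∃ y₀ ∈ ⋂ n : ℕ, E n,
        Tendsto (fun k => y (φ k)) atTop (nhds y₀) ∧ x ∈ R l y₀) :
    (⋂ n : ℕ, E n) ⊆ (⋃ t : Fin N, relImage (R t) (⋂ n : ℕ, E n)) ∧
    (⋂ n : ℕ, E n) = ⋃ t : Fin N, relImage (R t) (⋂ n : ℕ, E n) := by

  have hmono : ∀ (t : Fin N) (F G : Set T), F ⊆ G →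
      relImage (R t) F ⊆ relImage (R t) G := by
    intro t F G h
    exact Set.biUnion_subset_biUnion_left h
  have hsub0 : ∀ n, E n ⊆ E₀ := by
    intro n
    induction n with
    | zero => rw [hE0]
    | succ n ih =>
      rw [hEsucc]
      exact Set.iUnion_subset fun t => (hmono t _ _ ih).trans (hIRSb t)
  have hdec : ∀ n, E (n + 1) ⊆ E n := by
    intro n
    induction n with
    | zero => rw [hE0]; exact hsub0 1
    | succ n ih =>
      rw [hEsucc (n + 1)]
      exact Set.iUnion_subset fun t => (hmono t _ _ ih).trans
        (by rw [hEsucc n]; exact Set.subset_iUnion (fun s => relImage (R s) (E n)) t)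
  have key : (⋂ n : ℕ, E n) ⊆ ⋃ t : Fin N, relImage (R t) (⋂ n : ℕ, E n) := by
    intro x hx
    have hxE₀ : x ∈ E₀ := hE0 ▸ (Set.mem_iInter.mp hx 0)
    have hsel : ∀ n : ℕ, ∃ t : Fin N, ∃ z ∈ E n, x ∈ R t z := by
      intro n
      have hx1 : x ∈ E (n + 1) := Set.mem_iInter.mp hx (n + 1)
      rw [hEsucc] at hx1
      obtain ⟨t, ht⟩ := Set.mem_iUnion.mp hx1
      obtain ⟨z, hz, hxz⟩ := Set.mem_iUnion₂.mp ht
      exact ⟨t, z, hz, hxz⟩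
    choose t y hy hxy using hsel
    obtain ⟨l, hl⟩ := Finite.exists_infinite_fiber t
    have hpinf : {n | t n = l}.Infinite := Set.infinite_coe_iff.mp hl
    set p : ℕ → Prop := fun n => t n = l with hp
    have hmonoN : StrictMono (Nat.nth p) := Nat.nth_strictMono hpinf
    have hmem : ∀ k, p (Nat.nth p k) := fun k => Nat.nth_mem_of_infinite hpinf k
    obtain ⟨φ, hφ, y₀, hy₀K, hconv, hxR⟩ :=
      hC x hxE₀ l (Nat.nth p) hmonoN (fun k => y (Nat.nth p k))
        (fun k => hy (Nat.nth p k))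
        (fun k => by have := hxy (Nat.nth p k); rwa [hmem k] at this)
    exact Set.mem_iUnion.mpr ⟨l, Set.mem_iUnion₂.mpr ⟨y₀, hy₀K, hxR⟩⟩
  refine ⟨key, Set.Subset.antisymm key ?_⟩
  intro x hx
  obtain ⟨t, ht⟩ := Set.mem_iUnion.mp hx
  obtain ⟨z, hzK, hxz⟩ := Set.mem_iUnion₂.mp ht
  apply Set.mem_iInter.mpr
  intro n
  apply hdec n
  rw [hEsucc]
  exact Set.mem_iUnion.mpr ⟨t, Set.mem_iUnion₂.mpr ⟨z, Set.mem_iInter.mp hzK n, hxz⟩⟩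
end

section
/- Let E₀ := {0,1} ∪ {1/2ⁿ : n ∈ ℕ, n ≥ 1} ⊆ ℝ, and let R₁ be the relation on E₀ defined by R₁(0) = {1}, R₁(1/2ⁿ) = {0, 1/2^{n+1}} for n ≥ 1, and R₁(1) = {1}. Define E_{n+1} := R₁(E_n). Then for every n ≥ 1, E_n = {0,1} ∪ {1/2^k : k ≥ n+1}; the attractor K := ⋂_{n=0}^∞ E_n equals {0,1}; R₁(K) = {1}; hence K is not contained in R₁(K). Moreover, R₁ does not satisfy Condition (C): with x = 0 and y_{n_k} = 1/2^k ∈ E_{n_k}, the sequence (y_{n_k}) converges to y = 0 but x ∉ R₁(0) = {1}. -/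
open Set Filter

lemma mem_relImage {T : Type*} (R : T → Set T) (F : Set T) (y : T) :
    y ∈ relImage R F ↔ ∃ x ∈ F, y ∈ R x := by simp [relImage]

lemma half_pow_ne_zero (k : ℕ) : (1:ℝ)/2^k ≠ 0 :=
  one_div_ne_zero (pow_ne_zero _ two_ne_zero)

lemma half_pow_ne_one (k : ℕ) (hk : 1 ≤ k) : (1:ℝ)/2^k ≠ 1 := by
  have : (1:ℝ) < 2^k := one_lt_pow₀ (by norm_num) (by omega)
  intro h
  rw [div_eq_one_iff_eq (by positivity)] at h
  linarith

lemma half_pow_inj {k j : ℕ} (h : (1:ℝ)/2^k = 1/2^j) : k = j := by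
  by_contra hne
  rcases Nat.lt_or_ge k j with hlt | hge
  · have : (2:ℝ)^k < 2^j := pow_lt_pow_right₀ one_lt_two hlt
    have h2 : (2:ℝ)^j = 2^k := by field_simp at h; linarith [h]
    linarith
  · have hlt : j < k := by omega
    have : (2:ℝ)^j < 2^k := pow_lt_pow_right₀ one_lt_two hlt
    have h2 : (2:ℝ)^j = 2^k := by field_simp at h; linarith [h]
    linarith

set_option maxHeartbeats 1000000 in
/-- The counterexample of Example 2.5: for
`E₀ = {0,1} ∪ {1/2ⁿ : n ≥ 1}` and the relation `R₁` with `R₁(0) = {1}`,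
`R₁(1/2ⁿ) = {0, 1/2^{n+1}}` (n ≥ 1), `R₁(1) = {1}`, and `E_{n+1} := R₁(E_n)`:
every `E_n` (n ≥ 1) equals `{0,1} ∪ {1/2^k : k ≥ n+1}`, the attractor
`K = ⋂_n E_n` equals `{0,1}`, `R₁(K) = {1}`, so `K ⊄ R₁(K)`; moreover `R₁`
does not satisfy Condition (C). -/
theorem irs_counterexample_conditionC
    (R : ℝ → Set ℝ)
    (hR0 : R 0 = {1})
    (hR1 : R 1 = {1})
    (hRn : ∀ n : ℕ, 1 ≤ n → R (1 / 2 ^ n) = {0, 1 / 2 ^ (n + 1)})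
    (E : ℕ → Set ℝ)
    (hE0 : E 0 = ({0, 1} : Set ℝ) ∪ {x : ℝ | ∃ n : ℕ, 1 ≤ n ∧ x = 1 / 2 ^ n})
    (hEsucc : ∀ n : ℕ, E (n + 1) = relImage R (E n)) :
    (∀ n : ℕ, 1 ≤ n → E n = ({0, 1} : Set ℝ) ∪ {x : ℝ | ∃ k : ℕ, n + 1 ≤ k ∧ x = 1 / 2 ^ k}) ∧
    (⋂ n : ℕ, E n) = ({0, 1} : Set ℝ) ∧
    relImage R (⋂ n : ℕ, E n) = ({1} : Set ℝ) ∧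
    ¬ (⋂ n : ℕ, E n) ⊆ relImage R (⋂ n : ℕ, E n) ∧
    -- Condition (C) fails for the IRS {R}
    ¬ (∀ x ∈ E 0, ∀ nk : ℕ → ℕ, StrictMono nk →
        ∀ y : ℕ → ℝ, (∀ k : ℕ, y k ∈ E (nk k)) → (∀ k : ℕ, x ∈ R (y k)) →
        ∃ φ : ℕ → ℕ, StrictMono φ ∧ ∃ y₀ ∈ ⋂ n : ℕ, E n,
          Tendsto (fun k => y (φ k)) atTop (nhds y₀) ∧ x ∈ R y₀) := by
  -- General formula for E n, all n (for n = 0 it coincides with hE0)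
  have key : ∀ n : ℕ, E n = ({0, 1} : Set ℝ) ∪
      {x : ℝ | ∃ k : ℕ, n + 1 ≤ k ∧ x = 1 / 2 ^ k} := by
    intro n
    induction n with
    | zero => simpa using hE0
    | succ n ih =>
      rw [hEsucc n, ih]
      ext x
      rw [mem_relImage]
      constructor
      · rintro ⟨z, hz, hxz⟩
        rcases hz with hz | hz
        · rcases hz with hz | hz
          · subst hz; rw [hR0] at hxz
            exact Or.inl (Or.inr hxz)
          · simp only [mem_singleton_iff] at hz; subst hz; rw [hR1] at hxz
            exact Or.inl (Or.inr hxz)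
        · obtain ⟨k, hk, rfl⟩ := hz
          rw [hRn k (by omega)] at hxz
          rcases hxz with hx | hx
          · exact Or.inl (Or.inl hx)
          · exact Or.inr ⟨k + 1, by omega, hx⟩
      · rintro (hx | hx)
        · rcases hx with hx | hx
          · -- x = 0: comes from 1/2^(n+1)
            refine ⟨1/2^(n+1), Or.inr ⟨n+1, le_refl _, rfl⟩, ?_⟩
            rw [hRn (n+1) (by omega)]
            exact Or.inl hx
          · simp only [mem_singleton_iff] at hx
            exact ⟨1, Or.inl (Or.inr rfl), by rw [hR1]; exact hx⟩
        · obtain ⟨k, hk, rfl⟩ := hx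
          refine ⟨1/2^(k-1), Or.inr ⟨k-1, by omega, rfl⟩, ?_⟩
          rw [hRn (k-1) (by omega)]
          right
          have : k - 1 + 1 = k := by omega
          rw [this]; rfl
  have hK : (⋂ n : ℕ, E n) = ({0, 1} : Set ℝ) := by
    ext x
    simp only [mem_iInter]
    constructor
    · intro hx
      have h1 := hx 1
      rw [key 1] at h1
      rcases h1 with h1 | h1
      · exact h1
      · obtain ⟨k, hk, rfl⟩ := h1
        exfalso
        have hk2 := hx k
        rw [key k] at hk2
        rcases hk2 with (h | h) | h
        · exact half_pow_ne_zero k h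
        · exact half_pow_ne_one k (by omega) h
        · obtain ⟨j, hj, hje⟩ := h
          have := half_pow_inj hje
          omega
    · intro hx n
      rw [key n]
      exact Or.inl hx
  have hRK : relImage R (⋂ n : ℕ, E n) = ({1} : Set ℝ) := by
    rw [hK]
    ext x
    rw [mem_relImage]
    constructor
    · rintro ⟨z, hz, hxz⟩
      rcases hz with hz | hz
      · subst hz; rwa [hR0] at hxz
      · simp only [mem_singleton_iff] at hz; subst hz; rwa [hR1] at hxz
    · rintro rfl
      exact ⟨0, Or.inl rfl, by rw [hR0]; rfl⟩
  refine ⟨fun n _ => key n, hK, hRK, ?_, ?_⟩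
  · intro hsub
    have h0 : (0:ℝ) ∈ ⋂ n : ℕ, E n := by rw [hK]; exact Or.inl rfl
    have := hsub h0
    rw [hRK] at this
    simp only [mem_singleton_iff] at this
    norm_num at this
  · intro hC
    have hx0 : (0:ℝ) ∈ E 0 := by rw [hE0]; exact Or.inl (Or.inl rfl)
    obtain ⟨φ, hφ, y₀, hy₀K, hten, hxR⟩ :=
      hC 0 hx0 id strictMono_id (fun k => 1/2^(k+1))
        (fun k => by
          show (1:ℝ)/2^(k+1) ∈ E (id k)
          rw [id, key k]
          exact Or.inr ⟨k + 1, by omega, rfl⟩)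
        (fun k => by rw [hRn (k+1) (by omega)]; exact Or.inl rfl)
    -- the subsequence tends to 0
    have hlim : Tendsto (fun k => (1:ℝ)/2^(φ k + 1)) atTop (nhds 0) := by
      have h1 : Tendsto (fun m : ℕ => ((1:ℝ)/2)^m) atTop (nhds 0) :=
        tendsto_pow_atTop_nhds_zero_of_lt_one (by norm_num) (by norm_num)
      have h2 : Tendsto (fun k => φ k + 1) atTop atTop :=
        (strictMono_nat_of_lt_succ fun k => by
          have := hφ (Nat.lt_succ_self k); simp only [Nat.succ_eq_add_one] at this ⊢; omega).tendsto_atTop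
      have := h1.comp h2
      simpa [div_pow, Function.comp_def] using this
    have hy0 : y₀ = 0 := tendsto_nhds_unique hten hlim
    subst hy0
    rw [hR0] at hxR
    simp only [mem_singleton_iff] at hxR
    norm_num at hxR
end

section
/- Let 𝒞² = {(cos θ, sin θ, z) : θ ∈ [−π,π], z ∈ [0,2π]} be the cylinder with its flat metric, and let E₀ := E₀¹ ∪ E₀², where E₀¹ := {(cos θ, sin θ, z) : θ ∈ [−π,0], z ∈ [0, √3·θ + √3·π]} and E₀² := {(cos θ, sin θ, z) : θ ∈ [0,π], z ∈ [0, −√3·θ + √3·π]}. Define relations on E₀ by: R₁(x) = {(cos(θ/2 − π/2), sin(θ/2 − π/2), z/2)} for x = (cos θ, sin θ, z) ≠ (−1,0,0) and R₁((−1,0,0)) = {(1,0,0), (−1,0,0)}; R₂(x) = {(cos(θ/2 + π/2), sin(θ/2 + π/2), z/2)} for x ≠ (−1,0,0) and R₂((−1,0,0)) = {(−1,0,0), (1,0,0)}; R₃(x) = {(cos(θ/2), sin(θ/2), z/2 + √3·π/2)} for x ≠ (−1,0,0) and R₃((−1,0,0)) = {(0,1,√3·π/2), (0,−1,√3·π/2)}.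 Let E_{n+1} := ⋃_{t=1}^3 R_t(E_n) and K := ⋂_{n=0}^∞ E_n. Then the Hausdorff dimension of K equals log 3 / log 2. -/
open Set Real

/-- The point `(cos θ, sin θ, z)` of the cylinder `𝒞² ⊆ ℝ³`. -/
noncomputable def cylPt (θ z : ℝ) : EuclideanSpace ℝ (Fin 3) :=
  (EuclideanSpace.equiv (Fin 3) ℝ).symm ![Real.cos θ, Real.sin θ, z]

noncomputable section
open MeasureTheory Filter
open scoped ENNReal NNReal
namespace CG

abbrev Pt := ℝ × ℝ

/-- centers of the three contractions -/
def ctr (t : Fin 3) : Pt :=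
  if t = 0 then (-(π/2), 0) else if t = 1 then (π/2, 0) else (0, Real.sqrt 3 * π / 2)

/-- the three contractions -/
def f (t : Fin 3) (p : Pt) : Pt := (p.1 / 2 + (ctr t).1, p.2 / 2 + (ctr t).2)

/-- inverse maps -/
def g (t : Fin 3) (p : Pt) : Pt := (2 * (p.1 - (ctr t).1), 2 * (p.2 - (ctr t).2))

lemma g_f (t : Fin 3) (p : Pt) : g t (f t p) = p := by
  refine Prod.ext ?_ ?_ <;> simp only [f, g] <;> ring

lemma f_g (t : Fin 3) (p : Pt) : f t (g t p) = p := by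
  refine Prod.ext ?_ ?_ <;> simp only [f, g] <;> ring

lemma dist_f (t : Fin 3) (p q : Pt) : dist (f t p) (f t q) = dist p q / 2 := by
  simp only [f, Prod.dist_eq, Real.dist_eq]
  rw [show p.1 / 2 + (ctr t).1 - (q.1 / 2 + (ctr t).1) = (p.1 - q.1) / 2 from by ring,
    show p.2 / 2 + (ctr t).2 - (q.2 / 2 + (ctr t).2) = (p.2 - q.2) / 2 from by ring,
    abs_div, abs_div, abs_two, ← max_div_div_right (by norm_num : (0:ℝ) ≤ 2)]

lemma dist_g (t : Fin 3) (p q : Pt) : dist (g t p) (g t q) = 2 * dist p q := by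
  have := dist_f t (g t p) (g t q)
  rw [f_g, f_g] at this
  rw [this]; ring

/-- the closed triangle -/
def T0 : Set Pt := {p | 0 ≤ p.2 ∧ p.2 ≤ Real.sqrt 3 * p.1 + Real.sqrt 3 * π ∧
    p.2 ≤ -(Real.sqrt 3 * p.1) + Real.sqrt 3 * π}

/-- the open triangle -/
def U : Set Pt := {p | 0 < p.2 ∧ p.2 < Real.sqrt 3 * p.1 + Real.sqrt 3 * π ∧
    p.2 < -(Real.sqrt 3 * p.1) + Real.sqrt 3 * π}

lemma sq3_pos : (0:ℝ) < Real.sqrt 3 := Real.sqrt_pos.2 (by norm_num)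

lemma sq3_lt_2 : Real.sqrt 3 < 2 := by
  nlinarith [Real.sq_sqrt (by norm_num : (3:ℝ) ≥ 0), Real.sqrt_nonneg 3]

lemma one_lt_sq3 : (1:ℝ) < Real.sqrt 3 := by
  nlinarith [Real.sq_sqrt (by norm_num : (3:ℝ) ≥ 0), Real.sqrt_nonneg 3]

lemma T0_mem_theta {p : Pt} (hp : p ∈ T0) : -π ≤ p.1 ∧ p.1 ≤ π := by
  obtain ⟨h0, h1, h2⟩ := hp
  have s3 := sq3_pos
  constructor <;> nlinarith

lemma U_subset_T0 : U ⊆ T0 := fun p hp => ⟨le_of_lt hp.1, le_of_lt hp.2.1, le_of_lt hp.2.2⟩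

lemma f_mem_T0 {t : Fin 3} {p : Pt} (hp : p ∈ T0) : f t p ∈ T0 := by
  obtain ⟨h0, h1, h2⟩ := hp
  have hθ := T0_mem_theta ⟨h0, h1, h2⟩
  have s3 := sq3_pos
  have pi3 := Real.pi_pos
  fin_cases t <;>
    · simp only [f, ctr, T0, Set.mem_setOf_eq]
      norm_num [Fin.ext_iff]
      refine ⟨by nlinarith, by nlinarith, by nlinarith⟩

lemma f_mem_U {t : Fin 3} {p : Pt} (hp : p ∈ U) : f t p ∈ U := by
  obtain ⟨h0, h1, h2⟩ := hp
  have hθ := T0_mem_theta (U_subset_T0 ⟨h0, h1, h2⟩)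
  have s3 := sq3_pos
  have pi3 := Real.pi_pos
  fin_cases t <;>
    · simp only [f, ctr, U, Set.mem_setOf_eq]
      norm_num [Fin.ext_iff]
      refine ⟨by nlinarith, by nlinarith, by nlinarith⟩

/-- separation of the images of the open triangle -/
lemma f_U_disj {i j : Fin 3} (hij : i ≠ j) : Disjoint (f i '' U) (f j '' U) := by
  have key : ∀ p ∈ U, ∀ q ∈ U, f 0 p ≠ f 1 q ∧ f 0 p ≠ f 2 q ∧ f 1 p ≠ f 2 q := by
    intro p hp q hq
    have hpθ := (T0_mem_theta (U_subset_T0 hp))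
    have hqθ := (T0_mem_theta (U_subset_T0 hq))
    have h2 : p.2 < Real.sqrt 3 * π := by nlinarith [hp.2.1, hp.2.2, hp.1]
    have h2q : 0 < q.2 := hq.1
    have hp1 : p.1 < π := by nlinarith [hp.1, hp.2.2, sq3_pos]
    have hq1 : -π < q.1 := by nlinarith [hq.1, hq.2.1, sq3_pos]
    refine ⟨fun h => ?_, fun h => ?_, fun h => ?_⟩ <;>
    · have h1 := congrArg Prod.fst h
      have h2' := congrArg Prod.snd h
      simp only [f, ctr] at h1 h2'
      norm_num [Fin.ext_iff] at h1 h2'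
      nlinarith [hp.1, hq.1, h2, h2q]
  rw [Set.disjoint_left]
  rintro x ⟨p, hp, rfl⟩ ⟨q, hq, hEq⟩
  fin_cases i <;> fin_cases j <;>
    first
      | exact hij rfl
      | exact (key p hp q hq).1 hEq.symm
      | exact (key p hp q hq).2.1 hEq.symm
      | exact (key p hp q hq).2.2 hEq.symm
      | exact (key q hq p hp).1 hEq
      | exact (key q hq p hp).2.1 hEq
      | exact (key q hq p hp).2.2 hEq

/-! ### words and iterated maps -/

def shift (w : ℕ → Fin 3) : ℕ → Fin 3 := fun k => w (k + 1)

def iter : ℕ → (ℕ → Fin 3) → Pt → Pt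
  | 0, _ => id
  | n+1, w => f (w 0) ∘ iter n (shift w)

def ext {n : ℕ} (v : Fin n → Fin 3) : ℕ → Fin 3 := fun k => if h : k < n then v ⟨k, h⟩ else 0

def T : ℕ → Set Pt
  | 0 => T0
  | n+1 => ⋃ t : Fin 3, f t '' T n

def S : Set Pt := ⋂ n, T n

lemma T_succ_subset (n : ℕ) : T (n+1) ⊆ T n := by
  induction n with
  | zero =>
    rintro x hx
    simp only [T, Set.mem_iUnion] at hx
    obtain ⟨t, p, hp, rfl⟩ := hx
    exact f_mem_T0 hp
  | succ n ih =>
    rintro x hx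
    simp only [T, Set.mem_iUnion] at hx ⊢
    obtain ⟨t, p, hp, rfl⟩ := hx
    exact ⟨t, p, ih hp, rfl⟩

lemma T_subset_T0 (n : ℕ) : T n ⊆ T0 := by
  induction n with
  | zero => exact le_refl _
  | succ n ih => exact (T_succ_subset n).trans ih

lemma S_subset_T (n : ℕ) : S ⊆ T n := Set.iInter_subset _ n

lemma iter_congr {n : ℕ} {w w' : ℕ → Fin 3} (h : ∀ k < n, w k = w' k) (p : Pt) :
    iter n w p = iter n w' p := by
  induction n generalizing w w' with
  | zero => rfl
  | succ n ih =>
    simp only [iter, Function.comp_apply]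
    rw [h 0 (Nat.succ_pos n)]
    exact congrArg _ (ih fun k hk => h (k+1) (Nat.succ_lt_succ hk))

lemma dist_iter (n : ℕ) (w : ℕ → Fin 3) (p q : Pt) :
    dist (iter n w p) (iter n w q) = (1/2)^n * dist p q := by
  induction n generalizing w with
  | zero => simp [iter]
  | succ n ih =>
    simp only [iter, Function.comp_apply, dist_f, ih (shift w)]
    ring

lemma iter_image_subset_T (n : ℕ) (w : ℕ → Fin 3) : iter n w '' T0 ⊆ T n := by
  induction n generalizing w with
  | zero => simp [iter, T]
  | succ n ih =>
    rintro x ⟨p, hp, rfl⟩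
    simp only [T, Set.mem_iUnion]
    exact ⟨w 0, iter n (shift w) p, ih (shift w) ⟨p, hp, rfl⟩, rfl⟩

lemma iter_image_U_subset (n : ℕ) (w : ℕ → Fin 3) : iter n w '' U ⊆ U := by
  induction n generalizing w with
  | zero => simp [iter]
  | succ n ih =>
    rintro x ⟨p, hp, rfl⟩
    exact f_mem_U (ih (shift w) ⟨p, hp, rfl⟩)

lemma T_eq (n : ℕ) : T n = ⋃ v : Fin n → Fin 3, iter n (ext v) '' T0 := by
  induction n with
  | zero =>
    simp only [T, iter, Set.image_id]
    exact (Set.iUnion_const _).symm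
  | succ n ih =>
    ext x
    simp only [T, Set.mem_iUnion, ih]
    constructor
    · rintro ⟨t, p, hp, rfl⟩
      simp only [Set.mem_iUnion] at hp
      obtain ⟨v, z, hz, rfl⟩ := hp
      refine ⟨Fin.cons t v, z, hz, ?_⟩
      simp only [iter, Function.comp_apply]
      have h0 : ext (Fin.cons t v) 0 = t := by simp [ext]
      rw [h0]
      congr 1
      refine iter_congr (fun k hk => ?_) z
      simp only [shift, ext]
      rw [dif_pos (Nat.succ_lt_succ hk), dif_pos hk]
      exact Fin.cons_succ (α := fun _ : Fin (n+1) => Fin 3) t v ⟨k, hk⟩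
    · rintro ⟨v, z, hz, rfl⟩
      refine ⟨v 0, iter n (shift (ext v)) z, ?_, ?_⟩
      · have : iter n (shift (ext v)) z = iter n (ext (Fin.tail v)) z := by
          refine iter_congr (fun k hk => ?_) z
          simp only [shift, ext]
          rw [dif_pos (Nat.succ_lt_succ hk), dif_pos hk]
          rfl
        rw [this]
        exact Set.mem_iUnion.2 ⟨Fin.tail v, z, hz, rfl⟩
      · simp only [iter, Function.comp_apply]
        congr 1

/-! ### diameter bounds -/

lemma z_le_T0 {p : Pt} (hp : p ∈ T0) : p.2 ≤ Real.sqrt 3 * π := by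
  obtain ⟨h0, h1, h2⟩ := hp; linarith

lemma dist_le_T0 {p q : Pt} (hp : p ∈ T0) (hq : q ∈ T0) : dist p q ≤ 7 := by
  have hpθ := T0_mem_theta hp
  have hqθ := T0_mem_theta hq
  have hpz := z_le_T0 hp
  have hqz := z_le_T0 hq
  have hpi : π ≤ 3.15 := by linarith [Real.pi_lt_d2]
  have s3 := sq3_lt_2
  have s3' := sq3_pos
  rw [Prod.dist_eq]
  apply max_le <;> rw [Real.dist_eq, abs_le] <;> constructor <;> nlinarith [hp.1, hq.1]

lemma ediam_iter_le (n : ℕ) (w : ℕ → Fin 3) :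
    EMetric.diam (iter n w '' T0) ≤ ENNReal.ofReal ((1/2)^n * 7) := by
  apply EMetric.diam_le
  rintro x ⟨p, hp, rfl⟩ y ⟨q, hq, rfl⟩
  rw [edist_dist, dist_iter]
  exact ENNReal.ofReal_le_ofReal (by
    have := dist_le_T0 hp hq
    have h2 : (0:ℝ) ≤ (1/2)^n := by positivity
    nlinarith)

/-! ### the dimension value -/

def dd : ℝ := Real.log 3 / Real.log 2

lemma dd_eq_logb : dd = Real.logb 2 3 := rfl

lemma dd_pos : 0 < dd := by
  apply div_pos (Real.log_pos (by norm_num)) (Real.log_pos (by norm_num))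

lemma two_rpow_dd : (2:ℝ) ^ dd = 3 := by
  rw [dd_eq_logb]
  exact Real.rpow_logb (by norm_num) (by norm_num) (by norm_num)

lemma half_rpow_dd : ((1/2 : ℝ)) ^ dd = 1/3 := by
  rw [one_div, Real.inv_rpow (by norm_num : (0:ℝ) ≤ 2), two_rpow_dd, one_div]

lemma key_real (n : ℕ) : (3:ℝ)^n * ((1/2)^n * 7)^dd = 7 ^ dd := by
  rw [Real.mul_rpow (by positivity) (by norm_num)]
  rw [← Real.rpow_natCast (1/2 : ℝ) n, ← Real.rpow_mul (by norm_num),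
    mul_comm (n:ℝ) dd, Real.rpow_mul (by norm_num), half_rpow_dd,
    Real.rpow_natCast]
  rw [show ((1:ℝ)/3)^n = ((3:ℝ)^n)⁻¹ by rw [one_div, inv_pow]]
  have h3 : (3:ℝ)^n ≠ 0 := by positivity
  field_simp

/-! ### upper bound -/

lemma hausdorff_upper : μH[dd] S ≤ ENNReal.ofReal (7 ^ dd) := by
  have hr : Tendsto (fun n : ℕ => ENNReal.ofReal ((1/2)^n * 7)) atTop (nhds 0) := by
    rw [show (0 : ℝ≥0∞) = ENNReal.ofReal 0 by simp]
    apply ENNReal.tendsto_ofReal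
    have : Tendsto (fun n : ℕ => (1/2 : ℝ)^n) atTop (nhds 0) :=
      tendsto_pow_atTop_nhds_zero_of_lt_one (by norm_num) (by norm_num)
    simpa using this.mul_const 7
  have hle := MeasureTheory.Measure.hausdorffMeasure_le_liminf_sum dd S (fun n => ENNReal.ofReal ((1/2)^n * 7))
      hr (fun n v => iter n (ext v) '' T0)
      (Filter.Eventually.of_forall fun n v => ediam_iter_le n (ext v))
      (Filter.Eventually.of_forall fun n => by
        rw [← T_eq n]; exact S_subset_T n)
  refine hle.trans ?_
  have hb : ∀ n : ℕ, (∑ v : Fin n → Fin 3, EMetric.diam (iter n (ext v) '' T0) ^ dd)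
      ≤ ENNReal.ofReal (7 ^ dd) := by
    intro n
    calc (∑ v : Fin n → Fin 3, EMetric.diam (iter n (ext v) '' T0) ^ dd)
        ≤ ∑ _v : Fin n → Fin 3, ENNReal.ofReal ((1/2)^n * 7) ^ dd :=
          Finset.sum_le_sum fun v _ =>
            ENNReal.rpow_le_rpow (ediam_iter_le n (ext v)) dd_pos.le
      _ = (Fintype.card (Fin n → Fin 3)) * ENNReal.ofReal ((1/2)^n * 7) ^ dd := by
          rw [Finset.sum_const, Finset.card_univ, nsmul_eq_mul]
      _ = ENNReal.ofReal ((3:ℝ)^n) * ENNReal.ofReal (((1/2)^n * 7) ^ dd) := by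
          rw [Fintype.card_fun, Fintype.card_fin, Fintype.card_fin]
          rw [← ENNReal.ofReal_rpow_of_pos (by positivity)]
          congr 1
          rw [← ENNReal.ofReal_natCast]
          congr 1
          push_cast
          ring
      _ = ENNReal.ofReal ((3:ℝ)^n * ((1/2)^n * 7) ^ dd) := by
          rw [← ENNReal.ofReal_mul (by positivity)]
      _ = ENNReal.ofReal (7 ^ dd) := by rw [key_real]
  calc liminf (fun n => (∑ v : Fin n → Fin 3, EMetric.diam (iter n (ext v) '' T0) ^ dd)) atTop
      ≤ liminf (fun _n : ℕ => ENNReal.ofReal (7 ^ dd)) atTop :=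
        Filter.liminf_le_liminf (Filter.Eventually.of_forall hb)
    _ = ENNReal.ofReal (7 ^ dd) := liminf_const _

/-! ### the coding map -/

lemma ctr_bound (t : Fin 3) : |(ctr t).1| ≤ 4 ∧ |(ctr t).2| ≤ 4 := by
  have hpi : π ≤ 3.15 := by linarith [Real.pi_lt_d2]
  have hpi0 := Real.pi_pos
  have s3 := sq3_lt_2
  have s3' := sq3_pos
  fin_cases t <;>
    · simp only [ctr]
      norm_num [Fin.ext_iff, abs_le]
      constructor <;> nlinarith

lemma summable_code1 (w : ℕ → Fin 3) : Summable (fun k => (1/2:ℝ)^k * (ctr (w k)).1) := by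
  apply Summable.of_norm_bounded (g := fun k => (1/2:ℝ)^k * 4)
  · exact (summable_geometric_of_lt_one (by norm_num) (by norm_num)).mul_right 4
  · intro k
    rw [norm_mul, norm_pow, Real.norm_eq_abs, Real.norm_eq_abs,
      abs_of_pos (by norm_num : (0:ℝ) < 1/2)]
    exact mul_le_mul_of_nonneg_left (ctr_bound (w k)).1 (by positivity)

lemma summable_code2 (w : ℕ → Fin 3) : Summable (fun k => (1/2:ℝ)^k * (ctr (w k)).2) := by
  apply Summable.of_norm_bounded (g := fun k => (1/2:ℝ)^k * 4)
  · exact (summable_geometric_of_lt_one (by norm_num) (by norm_num)).mul_right 4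
  · intro k
    rw [norm_mul, norm_pow, Real.norm_eq_abs, Real.norm_eq_abs,
      abs_of_pos (by norm_num : (0:ℝ) < 1/2)]
    exact mul_le_mul_of_nonneg_left (ctr_bound (w k)).2 (by positivity)

def code (w : ℕ → Fin 3) : Pt :=
  (∑' k, (1/2:ℝ)^k * (ctr (w k)).1, ∑' k, (1/2:ℝ)^k * (ctr (w k)).2)

lemma code_shift (w : ℕ → Fin 3) : code w = f (w 0) (code (shift w)) := by
  refine Prod.ext ?_ ?_ <;> simp only [code, f]
  · rw [Summable.tsum_eq_zero_add (summable_code1 w)]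
    simp only [pow_zero, one_mul]
    rw [show (∑' k, (1/2:ℝ)^(k+1) * (ctr (w (k+1))).1)
        = ∑' k, (1/2:ℝ) * ((1/2:ℝ)^k * (ctr (shift w k)).1) from by
      congr 1; funext k; simp only [shift, pow_succ]; ring]
    rw [tsum_mul_left]
    ring
  · rw [Summable.tsum_eq_zero_add (summable_code2 w)]
    simp only [pow_zero, one_mul]
    rw [show (∑' k, (1/2:ℝ)^(k+1) * (ctr (w (k+1))).2)
        = ∑' k, (1/2:ℝ) * ((1/2:ℝ)^k * (ctr (shift w k)).2) from by
      congr 1; funext k; simp only [shift, pow_succ]; ring]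
    rw [tsum_mul_left]
    ring

lemma code_eq_iter (n : ℕ) (w : ℕ → Fin 3) :
    code w = iter n w (code (fun k => w (k + n))) := by
  induction n generalizing w with
  | zero => simp only [iter, id_eq, Nat.add_zero]
  | succ n ih =>
    rw [code_shift w, ih (shift w)]
    simp only [iter, Function.comp_apply]
    congr 2

lemma code_dist_zero (w : ℕ → Fin 3) : dist (code w) ((0:ℝ), (0:ℝ)) ≤ 8 := by
  have hg : Summable (fun k => (1/2:ℝ)^k * 4) :=
    (summable_geometric_of_lt_one (by norm_num) (by norm_num)).mul_right 4
  have h1 : ∀ (u : ℕ → ℝ), (∀ k, ‖u k‖ ≤ (1/2:ℝ)^k * 4) → ‖∑' k, u k‖ ≤ 8 := by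
    intro u hb
    have hs : Summable fun k => ‖u k‖ :=
      Summable.of_nonneg_of_le (fun k => norm_nonneg _) hb hg
    calc ‖∑' k, u k‖ ≤ ∑' k, ‖u k‖ := norm_tsum_le_tsum_norm hs
      _ ≤ ∑' k, (1/2:ℝ)^k * 4 := Summable.tsum_le_tsum hb hs hg
      _ = 8 := by
          rw [tsum_mul_right, tsum_geometric_of_lt_one (by norm_num) (by norm_num)]
          norm_num
  rw [Prod.dist_eq]
  apply max_le <;> rw [Real.dist_eq, sub_zero, ← Real.norm_eq_abs]
  · exact h1 _ (fun k => by
      rw [norm_mul, norm_pow, Real.norm_eq_abs, Real.norm_eq_abs,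
        abs_of_pos (by norm_num : (0:ℝ) < 1/2)]
      exact mul_le_mul_of_nonneg_left (ctr_bound (w k)).1 (by positivity))
  · exact h1 _ (fun k => by
      rw [norm_mul, norm_pow, Real.norm_eq_abs, Real.norm_eq_abs,
        abs_of_pos (by norm_num : (0:ℝ) < 1/2)]
      exact mul_le_mul_of_nonneg_left (ctr_bound (w k)).2 (by positivity))

lemma isClosed_T0 : IsClosed T0 := by
  have h1 : IsClosed {p : Pt | 0 ≤ p.2} := isClosed_le continuous_const continuous_snd
  have h2 : IsClosed {p : Pt | p.2 ≤ Real.sqrt 3 * p.1 + Real.sqrt 3 * π} :=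
    isClosed_le continuous_snd (by fun_prop)
  have h3 : IsClosed {p : Pt | p.2 ≤ -(Real.sqrt 3 * p.1) + Real.sqrt 3 * π} :=
    isClosed_le continuous_snd (by fun_prop)
  have : T0 = {p : Pt | 0 ≤ p.2} ∩ ({p : Pt | p.2 ≤ Real.sqrt 3 * p.1 + Real.sqrt 3 * π}
      ∩ {p : Pt | p.2 ≤ -(Real.sqrt 3 * p.1) + Real.sqrt 3 * π}) := rfl
  rw [this]
  exact h1.inter (h2.inter h3)

lemma zero_mem_T0 : ((0:ℝ), (0:ℝ)) ∈ T0 := by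
  refine ⟨le_refl _, ?_, ?_⟩ <;> simp <;> positivity

lemma code_mem_T0 (w : ℕ → Fin 3) : code w ∈ T0 := by
  rw [← isClosed_T0.closure_eq]
  rw [Metric.mem_closure_iff]
  intro ε hε
  obtain ⟨n, hn⟩ : ∃ n : ℕ, (1/2:ℝ)^n < ε / 9 :=
    exists_pow_lt_of_lt_one (by positivity) (by norm_num)
  refine ⟨iter n w ((0:ℝ), (0:ℝ)), iter_image_subset_T n w ⟨_, zero_mem_T0, rfl⟩
    |> T_subset_T0 n, ?_⟩
  rw [code_eq_iter n w, dist_iter]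
  calc (1/2:ℝ)^n * dist (code fun k => w (k + n)) ((0:ℝ), (0:ℝ))
      ≤ (1/2:ℝ)^n * 8 := by
        have := code_dist_zero (fun k => w (k + n))
        have h2 : (0:ℝ) ≤ (1/2:ℝ)^n := by positivity
        nlinarith
    _ < ε := by nlinarith [pow_pos (by norm_num : (0:ℝ) < 1/2) n]

lemma code_mem_S (w : ℕ → Fin 3) : code w ∈ S := by
  refine Set.mem_iInter.2 fun n => ?_
  rw [code_eq_iter n w]
  exact iter_image_subset_T n w ⟨_, code_mem_T0 _, rfl⟩

/-! ### base-3 digits -/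

lemma floor_triple (y : ℝ) : 3 * ⌊y⌋ ≤ ⌊3*y⌋ ∧ ⌊3*y⌋ < 3*⌊y⌋ + 3 := by
  constructor
  · apply Int.le_floor.2
    push_cast
    nlinarith [Int.floor_le y]
  · apply Int.floor_lt.2
    push_cast
    nlinarith [Int.lt_floor_add_one y]

def dig (x : ℝ) (k : ℕ) : Fin 3 :=
  ⟨(⌊3^(k+1) * x⌋ - 3 * ⌊3^k * x⌋).toNat % 3, Nat.mod_lt _ (by norm_num)⟩

lemma dig_val (x : ℝ) (k : ℕ) : ((dig x k : ℕ) : ℤ) = ⌊3^(k+1) * x⌋ - 3 * ⌊3^k * x⌋ := by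
  have h := floor_triple (3^k * x)
  rw [show (3:ℝ) * (3^k * x) = 3^(k+1) * x from by ring] at h
  have h0 : (0:ℤ) ≤ ⌊3^(k+1) * x⌋ - 3 * ⌊3^k * x⌋ := by omega
  have h3 : (⌊3^(k+1) * x⌋ - 3 * ⌊3^k * x⌋).toNat < 3 := by omega
  simp only [dig, Nat.mod_eq_of_lt h3]
  exact Int.toNat_of_nonneg h0

def cnum : ℕ → (ℕ → Fin 3) → ℤ
  | 0, _ => 0
  | n+1, w => 3 * cnum n w + (w n : ℕ)

lemma cnum_congr {n : ℕ} {w w' : ℕ → Fin 3} (h : ∀ k < n, w k = w' k) :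
    cnum n w = cnum n w' := by
  induction n with
  | zero => rfl
  | succ n ih =>
    simp only [cnum, ih (fun k hk => h k (hk.trans (Nat.lt_succ_self n))),
      h n (Nat.lt_succ_self n)]

lemma floor_eq_cnum {x : ℝ} (hx : x ∈ Ico (0:ℝ) 1) (n : ℕ) :
    ⌊3^n * x⌋ = cnum n (dig x) := by
  induction n with
  | zero =>
    simp only [pow_zero, one_mul, cnum]
    exact Int.floor_eq_zero_iff.2 (by exact ⟨hx.1, hx.2⟩)
  | succ n ih =>
    have := dig_val x n
    simp only [cnum, ← ih]
    omega

lemma I_volume {n : ℕ} (w : ℕ → Fin 3) :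
    volume {x ∈ Ico (0:ℝ) 1 | ∀ k < n, dig x k = w k} ≤ ENNReal.ofReal ((1/3)^n) := by
  have hsub : {x ∈ Ico (0:ℝ) 1 | ∀ k < n, dig x k = w k}
      ⊆ Ico ((cnum n w : ℝ)/3^n) ((cnum n w + 1)/3^n) := by
    rintro x ⟨hx, hd⟩
    have hfl : ⌊3^n * x⌋ = cnum n w := by
      rw [floor_eq_cnum hx n]
      exact cnum_congr hd
    have h1 : (cnum n w : ℝ) ≤ 3^n * x := hfl ▸ Int.floor_le _
    have h2 : 3^n * x < (cnum n w : ℝ) + 1 := by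
      have := Int.lt_floor_add_one (3^n * x)
      rw [hfl] at this
      push_cast at this
      linarith
    have h3 : (0:ℝ) < 3^n := by positivity
    constructor
    · rw [div_le_iff₀ h3]; linarith
    · rw [lt_div_iff₀ h3]; push_cast; linarith
  calc volume {x ∈ Ico (0:ℝ) 1 | ∀ k < n, dig x k = w k}
      ≤ volume (Ico ((cnum n w : ℝ)/3^n) ((cnum n w + 1)/3^n)) := measure_mono hsub
    _ = ENNReal.ofReal ((cnum n w + 1)/3^n - (cnum n w : ℝ)/3^n) := Real.volume_Ico
    _ = ENNReal.ofReal ((1/3)^n) := by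
        congr 1
        field_simp
        rw [← mul_pow]; norm_num

/-! ### inverse iterated maps and balls -/

def giter : ℕ → (ℕ → Fin 3) → Pt → Pt
  | 0, _ => id
  | n+1, w => giter n (shift w) ∘ g (w 0)

lemma iter_giter (n : ℕ) (w : ℕ → Fin 3) (p : Pt) : iter n w (giter n w p) = p := by
  induction n generalizing w p with
  | zero => rfl
  | succ n ih =>
    simp only [iter, giter, Function.comp_apply, ih (shift w), f_g]

def x0 : Pt := ((0:ℝ), Real.sqrt 3 * π / 2)

lemma x0_mem_T0 : x0 ∈ T0 := by
  have := sq3_pos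
  have := Real.pi_pos
  refine ⟨?_, ?_, ?_⟩ <;> simp only [x0] <;> nlinarith

def B0 : Set Pt := Metric.ball x0 (1/2)

lemma B0_subset_U : B0 ⊆ U := by
  intro p hp
  rw [B0, Metric.mem_ball, Prod.dist_eq, max_lt_iff, Real.dist_eq, Real.dist_eq] at hp
  obtain ⟨h1, h2⟩ := hp
  rw [abs_lt] at h1 h2
  simp only [x0] at h1 h2
  have s3 := sq3_pos
  have s3' := one_lt_sq3
  have s3'' := sq3_lt_2
  have hpi : (3:ℝ) < π := by linarith [Real.pi_gt_three]
  refine ⟨by nlinarith, by nlinarith, by nlinarith⟩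

lemma ball_subset_iter_B0 (n : ℕ) (w : ℕ → Fin 3) :
    Metric.ball (iter n w x0) ((1/2)^n * (1/2)) ⊆ iter n w '' B0 := by
  intro y hy
  refine ⟨giter n w y, ?_, iter_giter n w y⟩
  rw [B0, Metric.mem_ball]
  rw [Metric.mem_ball] at hy
  have hd : dist (iter n w (giter n w y)) (iter n w x0) = (1/2)^n * dist (giter n w y) x0 :=
    dist_iter n w _ _
  rw [iter_giter] at hd
  have h2 : (0:ℝ) < (1/2)^n := by positivity
  nlinarith [hy, hd]

lemma disjoint_iter_B0 : ∀ (n : ℕ) (w w' : ℕ → Fin 3), (∃ k < n, w k ≠ w' k) →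
    Disjoint (iter n w '' B0) (iter n w' '' B0) := by
  intro n
  induction n with
  | zero => rintro w w' ⟨k, hk, _⟩; exact absurd hk (Nat.not_lt_zero k)
  | succ n ih =>
    rintro w w' ⟨k, hk, hne⟩
    have himg : ∀ u : ℕ → Fin 3, iter (n+1) u '' B0 = f (u 0) '' (iter n (shift u) '' B0) := by
      intro u
      rw [show iter (n+1) u = f (u 0) ∘ iter n (shift u) from rfl, Set.image_comp]
    rw [himg w, himg w']
    by_cases h0 : w 0 = w' 0
    · have hinj : Function.Injective (f (w 0)) := Function.LeftInverse.injective (g_f (w 0))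
      rw [h0]
      have hk' : ∃ k' < n, shift w k' ≠ shift w' k' := by
        rcases Nat.eq_zero_or_pos k with rfl | hkpos
        · exact absurd h0 hne
        · exact ⟨k - 1, by omega, by
            simp only [shift]
            rw [show k - 1 + 1 = k from by omega]
            exact hne⟩
      rw [← h0]
      exact (Set.disjoint_image_iff hinj).2 (ih (shift w) (shift w') hk')
    · have hU : ∀ u : ℕ → Fin 3, iter n (shift u) '' B0 ⊆ U := fun u =>
        (Set.image_mono B0_subset_U).trans (iter_image_U_subset n (shift u))
      exact Set.disjoint_of_subset (Set.image_mono (hU w)) (Set.image_mono (hU w'))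
        (f_U_disj h0)

/-! ### counting -/

lemma vol_ball (p : Pt) (r : ℝ) :
    volume (Metric.ball p r) = ENNReal.ofReal (2*r) * ENNReal.ofReal (2*r) := by
  rw [← ball_prod_same, MeasureTheory.Measure.volume_eq_prod, MeasureTheory.Measure.prod_prod,
    Real.volume_ball, Real.volume_ball]

def Wset (n : ℕ) (x : Pt) (r : ℝ) : Finset (Fin n → Fin 3) :=
  @Finset.filter _ (fun v => ((iter n (ext v) '' T0) ∩ Metric.closedBall x r).Nonempty)
    (Classical.decPred _) Finset.univ

lemma mem_Wset {n : ℕ} {x : Pt} {r : ℝ} {v : Fin n → Fin 3} :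
    v ∈ Wset n x r ↔ ((iter n (ext v) '' T0) ∩ Metric.closedBall x r).Nonempty := by
  classical
  rw [Wset]
  rw [Finset.mem_filter]
  exact ⟨fun h => h.2, fun h => ⟨Finset.mem_univ _, h⟩⟩

lemma card_words_le (n : ℕ) (x : Pt) (r : ℝ) (hr0 : 0 ≤ r) (hr : r ≤ 7 * (1/2)^n) :
    (Wset n x r).card ≤ 900 := by
  have hp2 : (0:ℝ) < (1/2:ℝ)^n := by positivity
  have hdisj : ((Wset n x r : Set (Fin n → Fin 3))).PairwiseDisjoint
      (fun v => Metric.ball (iter n (ext v) x0) ((1/2)^n * (1/2))) := by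
    intro v _ v' _ hvv'
    refine Set.disjoint_of_subset (ball_subset_iter_B0 n (ext v))
      (ball_subset_iter_B0 n (ext v')) ?_
    apply disjoint_iter_B0
    obtain ⟨i, hi⟩ := Function.ne_iff.1 hvv'
    refine ⟨i, i.isLt, ?_⟩
    simp only [ext, i.isLt, dif_pos]
    simpa using hi
  have hsub : ∀ v ∈ Wset n x r, Metric.ball (iter n (ext v) x0) ((1/2)^n * (1/2))
      ⊆ Metric.ball x (15 * (1/2)^n) := by
    intro v hv
    obtain ⟨p, ⟨q, hq, rfl⟩, hpB⟩ := mem_Wset.1 hv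
    intro y hy
    rw [Metric.mem_ball] at hy ⊢
    have h1 : dist (iter n (ext v) q) (iter n (ext v) x0) = (1/2)^n * dist q x0 :=
      dist_iter n (ext v) q x0
    have h2 : dist q x0 ≤ 7 := dist_le_T0 hq x0_mem_T0
    have h3 : dist (iter n (ext v) q) x ≤ r := Metric.mem_closedBall.1 hpB
    have h4 : dist y x ≤ dist y (iter n (ext v) x0)
        + dist (iter n (ext v) x0) (iter n (ext v) q) + dist (iter n (ext v) q) x :=
      dist_triangle4 y _ _ x
    have h5 : dist (iter n (ext v) x0) (iter n (ext v) q) = (1/2)^n * dist x0 q :=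
      dist_iter n (ext v) x0 q
    have h6 : dist x0 q ≤ 7 := dist_le_T0 x0_mem_T0 hq
    nlinarith [dist_nonneg (x := x0) (y := q)]
  have hvol : ∀ v : Fin n → Fin 3, volume (Metric.ball (iter n (ext v) x0) ((1/2)^n * (1/2)))
      = ENNReal.ofReal ((1/2)^n) * ENNReal.ofReal ((1/2)^n) := by
    intro v
    rw [vol_ball]
    congr 2 <;> ring
  have hkey : ((Wset n x r).card : ℝ≥0∞) * (ENNReal.ofReal ((1/2)^n) * ENNReal.ofReal ((1/2)^n))
      ≤ ENNReal.ofReal (30*(1/2)^n) * ENNReal.ofReal (30*(1/2)^n) := by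
    calc ((Wset n x r).card : ℝ≥0∞) * (ENNReal.ofReal ((1/2)^n) * ENNReal.ofReal ((1/2)^n))
        = ∑ v ∈ Wset n x r, volume (Metric.ball (iter n (ext v) x0) ((1/2)^n * (1/2))) := by
          rw [Finset.sum_congr rfl (fun v _ => hvol v), Finset.sum_const, nsmul_eq_mul]
      _ = volume (⋃ v ∈ Wset n x r, Metric.ball (iter n (ext v) x0) ((1/2)^n * (1/2))) :=
          (measure_biUnion_finset hdisj (fun v _ => measurableSet_ball)).symm
      _ ≤ volume (Metric.ball x (15 * (1/2)^n)) := by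
          apply measure_mono
          exact Set.iUnion₂_subset hsub
      _ = ENNReal.ofReal (30*(1/2)^n) * ENNReal.ofReal (30*(1/2)^n) := by
          rw [vol_ball]
          congr 2 <;> ring
  have hreal : ((Wset n x r).card : ℝ) * ((1/2:ℝ)^n * (1/2)^n) ≤ (30*(1/2)^n) * (30*(1/2)^n) := by
    have := hkey
    rw [← ENNReal.ofReal_mul (by positivity), ← ENNReal.ofReal_mul (by positivity),
      ← ENNReal.ofReal_natCast ((Wset n x r).card), ← ENNReal.ofReal_mul (by positivity)]
      at this
    exact (ENNReal.ofReal_le_ofReal_iff (by positivity)).1 this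
  have h900 : (30*(1/2:ℝ)^n) * (30*(1/2)^n) = 900 * ((1/2:ℝ)^n * (1/2)^n) := by ring
  rw [h900] at hreal
  have : ((Wset n x r).card : ℝ) ≤ 900 :=
    le_of_mul_le_mul_right hreal (by positivity)
  exact_mod_cast this

/-! ### the measure estimate -/

lemma gmap_mem (y : ℝ) (n : ℕ) : code (dig y) ∈ iter n (dig y) '' T0 :=
  ⟨code (fun k => dig y (k+n)), code_mem_T0 _, (code_eq_iter n (dig y)).symm⟩

lemma nu_le_of_subset_ball (n : ℕ) (t : Set Pt) (x : Pt) (r : ℝ) (hr0 : 0 ≤ r)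
    (hr : r ≤ 7 * (1/2)^n) (ht : t ⊆ Metric.closedBall x r) :
    volume {y ∈ Ico (0:ℝ) 1 | code (dig y) ∈ t} ≤ 900 * ENNReal.ofReal ((1/3)^n) := by
  have hcover : {y ∈ Ico (0:ℝ) 1 | code (dig y) ∈ t}
      ⊆ ⋃ v ∈ Wset n x r, {y ∈ Ico (0:ℝ) 1 | ∀ k < n, dig y k = ext v k} := by
    rintro y ⟨hy, hyt⟩
    have hext : ∀ k < n, dig y k = ext (fun i : Fin n => dig y i) k := by
      intro k hk
      simp only [ext, hk, dif_pos]
    have hvW : (fun i : Fin n => dig y i) ∈ Wset n x r := by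
      refine mem_Wset.2 ⟨code (dig y), ?_, ht hyt⟩
      have himg : iter n (ext (fun i : Fin n => dig y i)) '' T0 = iter n (dig y) '' T0 :=
        Set.image_congr' (fun q => iter_congr (fun k hk => (hext k hk).symm) q)
      rw [himg]
      exact gmap_mem y n
    exact Set.mem_biUnion hvW ⟨hy, hext⟩
  calc volume {y ∈ Ico (0:ℝ) 1 | code (dig y) ∈ t}
      ≤ volume (⋃ v ∈ Wset n x r, {y ∈ Ico (0:ℝ) 1 | ∀ k < n, dig y k = ext v k}) :=
        measure_mono hcover
    _ ≤ ∑ v ∈ Wset n x r, volume {y ∈ Ico (0:ℝ) 1 | ∀ k < n, dig y k = ext v k} :=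
        measure_biUnion_finset_le _ _
    _ ≤ ∑ _v ∈ Wset n x r, ENNReal.ofReal ((1/3)^n) :=
        Finset.sum_le_sum (fun v _ => I_volume (ext v))
    _ = ((Wset n x r).card : ℝ≥0∞) * ENNReal.ofReal ((1/3)^n) := by
        rw [Finset.sum_const, nsmul_eq_mul]
    _ ≤ 900 * ENNReal.ofReal ((1/3)^n) := by
        apply mul_le_mul_left
        exact_mod_cast Nat.cast_le.2 (card_words_le n x r hr0 hr)

/-! ### the lower bound -/

lemma half_pow_rpow (m : ℕ) : ((1/2:ℝ)^m) ^ dd = (1/3:ℝ)^m := by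
  rw [← Real.rpow_natCast (1/2:ℝ) m, ← Real.rpow_mul (by norm_num), mul_comm,
    Real.rpow_mul (by norm_num), half_rpow_dd, Real.rpow_natCast]

lemma nu_le_diam (t : Set Pt) (hd : EMetric.diam t ≤ 1) :
    volume {y ∈ Ico (0:ℝ) 1 | code (dig y) ∈ t}
      ≤ 900 * ⨆ _ : t.Nonempty, EMetric.diam t ^ dd := by
  rcases Set.eq_empty_or_nonempty t with rfl | hne
  · simp
  rw [iSup_pos hne]
  have hdne : EMetric.diam t ≠ ⊤ := (hd.trans_lt (by norm_num)).ne
  set r := (EMetric.diam t).toReal with hrdef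
  have hr0 : 0 ≤ r := ENNReal.toReal_nonneg
  obtain ⟨x, hx⟩ := hne
  have htsub : t ⊆ Metric.closedBall x r := by
    intro y hy
    rw [Metric.mem_closedBall, dist_edist]
    exact ENNReal.toReal_le_of_le_ofReal hr0 (by
      rw [ENNReal.ofReal_toReal hdne]
      exact EMetric.edist_le_diam_of_mem hy hx)
  rcases eq_or_lt_of_le hr0 with hr00 | hrpos
  · have hb : ∀ n : ℕ, volume {y ∈ Ico (0:ℝ) 1 | code (dig y) ∈ t}
        ≤ 900 * ENNReal.ofReal ((1/3)^n) := fun n =>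
      nu_le_of_subset_ball n t x r hr0 (by rw [← hr00]; positivity) htsub
    have h1 : Filter.Tendsto (fun n : ℕ => ENNReal.ofReal ((1/3:ℝ)^n)) atTop (nhds 0) := by
      rw [show (0:ℝ≥0∞) = ENNReal.ofReal 0 by simp]
      exact ENNReal.tendsto_ofReal
        (tendsto_pow_atTop_nhds_zero_of_lt_one (by norm_num) (by norm_num))
    have hlim : Filter.Tendsto (fun n : ℕ => (900:ℝ≥0∞) * ENNReal.ofReal ((1/3:ℝ)^n))
        atTop (nhds 0) := by
      simpa using ENNReal.Tendsto.const_mul h1 (Or.inr (by norm_num : (900:ℝ≥0∞) ≠ ⊤))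
    have h0 := ge_of_tendsto' hlim hb
    exact le_trans h0 zero_le
  · have hex : ∃ n : ℕ, 7*(1/2:ℝ)^(n+1) < r := by
      obtain ⟨n, hn⟩ := exists_pow_lt_of_lt_one (show (0:ℝ) < r/14 by positivity)
        (show (1/2:ℝ) < 1 by norm_num)
      refine ⟨n, ?_⟩
      have := pow_nonneg (by norm_num : (0:ℝ) ≤ 1/2) n
      calc 7*(1/2:ℝ)^(n+1) = (7/2) * (1/2)^n := by ring
        _ < (7/2) * (r/14) := by nlinarith
        _ < r := by nlinarith
    classical
    set n := Nat.find hex with hn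
    have hn1 : 7*(1/2:ℝ)^(n+1) < r := Nat.find_spec hex
    have hn2 : r ≤ 7*(1/2:ℝ)^n := by
      rcases Nat.eq_zero_or_pos n with h0 | hpos
      · rw [h0]
        have : r ≤ 1 := by
          rw [hrdef, show (1:ℝ) = (1:ℝ≥0∞).toReal by simp]
          exact ENNReal.toReal_mono (by norm_num) hd
        norm_num
        linarith
      · have hnot := Nat.find_min hex (show n - 1 < n from Nat.sub_lt hpos one_pos)
        push_neg at hnot
        rw [show n - 1 + 1 = n from by omega] at hnot
        exact hnot
    calc volume {y ∈ Ico (0:ℝ) 1 | code (dig y) ∈ t}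
        ≤ 900 * ENNReal.ofReal ((1/3)^n) := nu_le_of_subset_ball n t x r hr0 hn2 htsub
      _ ≤ 900 * EMetric.diam t ^ dd := by
          apply mul_le_mul_right
          have h2 : (1/2:ℝ)^n < r := by
            have h3 : (1/2:ℝ)^n = 2 * (1/2:ℝ)^(n+1) := by ring
            have := pow_nonneg (by norm_num : (0:ℝ) ≤ 1/2) (n+1)
            nlinarith
          have h1 : ((1/3:ℝ))^n ≤ r ^ dd := by
            calc ((1/3:ℝ))^n = ((1/2:ℝ)^n) ^ dd := (half_pow_rpow n).symm
              _ ≤ r ^ dd := Real.rpow_le_rpow (by positivity) h2.le dd_pos.le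
          calc ENNReal.ofReal ((1/3)^n) ≤ ENNReal.ofReal (r ^ dd) :=
                ENNReal.ofReal_le_ofReal h1
            _ = ENNReal.ofReal r ^ dd := (ENNReal.ofReal_rpow_of_pos hrpos).symm
            _ = EMetric.diam t ^ dd := by rw [hrdef, ENNReal.ofReal_toReal hdne]

lemma hausdorff_lower : (900:ℝ≥0∞)⁻¹ ≤ μH[dd] S := by
  rw [MeasureTheory.Measure.hausdorffMeasure_apply]
  refine le_iSup₂_of_le 1 one_pos
    (le_iInf fun t => le_iInf fun hcov => le_iInf fun hdiam => ?_)
  have key : (1:ℝ≥0∞) ≤ 900 * ∑' m, ⨆ _ : (t m).Nonempty, EMetric.diam (t m) ^ dd := by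
    calc (1:ℝ≥0∞) = volume (Ico (0:ℝ) 1) := by simp
      _ ≤ volume (⋃ m, {y ∈ Ico (0:ℝ) 1 | code (dig y) ∈ t m}) := by
          apply measure_mono
          intro y hy
          have := hcov (code_mem_S (dig y))
          rw [Set.mem_iUnion] at this
          obtain ⟨m, hm⟩ := this
          exact Set.mem_iUnion.2 ⟨m, hy, hm⟩
      _ ≤ ∑' m, volume {y ∈ Ico (0:ℝ) 1 | code (dig y) ∈ t m} := measure_iUnion_le _
      _ ≤ ∑' m, 900 * ⨆ _ : (t m).Nonempty, EMetric.diam (t m) ^ dd :=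
          ENNReal.tsum_le_tsum fun m => nu_le_diam (t m) (hdiam m)
      _ = 900 * ∑' m, ⨆ _ : (t m).Nonempty, EMetric.diam (t m) ^ dd :=
          ENNReal.tsum_mul_left
  calc (900:ℝ≥0∞)⁻¹ = 900⁻¹ * 1 := (mul_one _).symm
    _ ≤ 900⁻¹ * (900 * ∑' m, ⨆ _ : (t m).Nonempty, EMetric.diam (t m) ^ dd) :=
        mul_le_mul_right key _
    _ = ∑' m, ⨆ _ : (t m).Nonempty, EMetric.diam (t m) ^ dd := by
        rw [← mul_assoc, ENNReal.inv_mul_cancel (by norm_num) (by norm_num), one_mul]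

lemma dimH_S : dimH S = ENNReal.ofReal dd := by
  have hco : ((dd.toNNReal : ℝ≥0) : ℝ) = dd := Real.coe_toNNReal dd dd_pos.le
  have hofr : ENNReal.ofReal dd = ((dd.toNNReal : ℝ≥0) : ℝ≥0∞) := rfl
  rw [hofr]
  apply le_antisymm
  · apply dimH_le_of_hausdorffMeasure_ne_top (d := dd.toNNReal)
    rw [hco]
    exact ne_top_of_le_ne_top ENNReal.ofReal_ne_top hausdorff_upper
  · apply le_dimH_of_hausdorffMeasure_ne_zero (d := dd.toNNReal)
    rw [hco]
    intro h0
    have := hausdorff_lower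
    rw [h0] at this
    simp at this

/-! ### the cylinder map -/

def Phi (p : Pt) : EuclideanSpace ℝ (Fin 3) := cylPt p.1 p.2

lemma dist_cylPt (a b a' b' : ℝ) : dist (cylPt a b) (cylPt a' b')
    = Real.sqrt ((Real.cos a - Real.cos a')^2 + (Real.sin a - Real.sin a')^2 + (b - b')^2) := by
  rw [EuclideanSpace.dist_eq]
  congr 1
  rw [Fin.sum_univ_three]
  simp only [show ∀ x y : ℝ, ∀ i : Fin 3, (cylPt x y) i = ![Real.cos x, Real.sin x, y] i
    from fun _ _ _ => rfl]
  simp [Real.dist_eq, sq_abs]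

lemma chord_sq (a a' : ℝ) : (Real.cos a - Real.cos a')^2 + (Real.sin a - Real.sin a')^2
    = 4 * Real.sin ((a - a')/2)^2 := by
  have h := Real.sin_sq_eq_half_sub ((a - a')/2)
  rw [show 2 * ((a - a')/2) = a - a' from by ring, Real.cos_sub] at h
  nlinarith [Real.sin_sq_add_cos_sq a, Real.sin_sq_add_cos_sq a']

lemma lip_Phi : LipschitzWith 2 Phi := by
  apply LipschitzWith.of_dist_le_mul
  intro p q
  have hPhi : ∀ r : Pt, Phi r = cylPt r.1 r.2 := fun _ => rfl
  rw [hPhi, hPhi, dist_cylPt]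
  have h3 : |p.1 - q.1| ≤ dist p q := by
    rw [Prod.dist_eq, Real.dist_eq]; exact le_max_left _ _
  have h4 : |p.2 - q.2| ≤ dist p q := by
    rw [Prod.dist_eq, Real.dist_eq]; exact le_max_right _ _
  have hub : (Real.cos p.1 - Real.cos q.1)^2 + (Real.sin p.1 - Real.sin q.1)^2 + (p.2 - q.2)^2
      ≤ (2 * dist p q)^2 := by
    have h1 := chord_sq p.1 q.1
    have h2 : Real.sin ((p.1 - q.1)/2)^2 ≤ ((p.1-q.1)/2)^2 := Real.sin_sq_le_sq
    nlinarith [sq_abs (p.1 - q.1), sq_abs (p.2 - q.2), dist_nonneg (x := p) (y := q),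
      abs_nonneg (p.1 - q.1), abs_nonneg (p.2 - q.2)]
  calc Real.sqrt ((Real.cos p.1 - Real.cos q.1)^2 + (Real.sin p.1 - Real.sin q.1)^2
        + (p.2 - q.2)^2) ≤ Real.sqrt ((2 * dist p q)^2) := Real.sqrt_le_sqrt hub
    _ = 2 * dist p q := Real.sqrt_sq (by positivity)
    _ = (2:ℝ≥0) * dist p q := by norm_num

def strip : Set Pt := {p | |p.1| ≤ π/2}

lemma anti_Phi_strip : ∀ p ∈ strip, ∀ q ∈ strip, dist p q ≤ 2 * dist (Phi p) (Phi q) := by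
  intro p hp q hq
  have hPhi : ∀ r : Pt, Phi r = cylPt r.1 r.2 := fun _ => rfl
  rw [hPhi, hPhi, dist_cylPt]
  have hpi := Real.pi_pos
  have hpi4 : π ≤ 4 := by linarith [Real.pi_lt_d2]
  have hδ : |p.1 - q.1| ≤ π := by
    have h1 := abs_add_le p.1 (-q.1)
    rw [abs_neg, ← sub_eq_add_neg] at h1
    have hp' : |p.1| ≤ π/2 := hp
    have hq' : |q.1| ≤ π/2 := hq
    linarith
  set D := Real.sqrt ((Real.cos p.1 - Real.cos q.1)^2 + (Real.sin p.1 - Real.sin q.1)^2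
      + (p.2 - q.2)^2) with hD
  have hD0 : 0 ≤ D := Real.sqrt_nonneg _
  have hDsq : D^2 = (Real.cos p.1 - Real.cos q.1)^2 + (Real.sin p.1 - Real.sin q.1)^2
      + (p.2 - q.2)^2 := Real.sq_sqrt (by positivity)
  have hz : |p.2 - q.2| ≤ D := by
    rw [← Real.sqrt_sq_eq_abs, hD]
    apply Real.sqrt_le_sqrt
    nlinarith [sq_nonneg (Real.cos p.1 - Real.cos q.1), sq_nonneg (Real.sin p.1 - Real.sin q.1)]
  have hθb : |p.1 - q.1| ≤ (π/2) * D := by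
    have habs : |(p.1 - q.1)/2| ≤ π/2 := by
      rw [abs_div, abs_two]
      linarith
    have hjord := Real.mul_abs_le_abs_sin habs
    have hchord : (2 * |Real.sin ((p.1 - q.1)/2)|)^2 ≤ D^2 := by
      rw [hDsq]
      nlinarith [chord_sq p.1 q.1, sq_nonneg (p.2 - q.2), sq_abs (Real.sin ((p.1 - q.1)/2))]
    have hchord' : 2 * |Real.sin ((p.1 - q.1)/2)| ≤ D := by
      have h1 : 2 * |Real.sin ((p.1 - q.1)/2)|
          = Real.sqrt ((2 * |Real.sin ((p.1 - q.1)/2)|)^2) :=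
        (Real.sqrt_sq (by positivity)).symm
      rw [h1, ← Real.sqrt_sq hD0]
      exact Real.sqrt_le_sqrt hchord
    rw [abs_div, abs_two] at hjord
    have h2 : |p.1 - q.1| ≤ π * |Real.sin ((p.1 - q.1)/2)| := by
      have h3 : 2/π * (|p.1 - q.1|/2) ≤ |Real.sin ((p.1 - q.1)/2)| := hjord
      have h4 : 2/π * (|p.1 - q.1|/2) = |p.1 - q.1| / π := by ring
      rw [h4] at h3
      calc |p.1 - q.1| = π * (|p.1 - q.1| / π) := by field_simp
        _ ≤ π * |Real.sin ((p.1 - q.1)/2)| := by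
            apply mul_le_mul_of_nonneg_left h3 hpi.le
    calc |p.1 - q.1| ≤ π * |Real.sin ((p.1 - q.1)/2)| := h2
      _ = (π/2) * (2 * |Real.sin ((p.1 - q.1)/2)|) := by ring
      _ ≤ (π/2) * D := mul_le_mul_of_nonneg_left hchord' (by positivity)
  rw [Prod.dist_eq]
  apply max_le <;> rw [Real.dist_eq] <;> nlinarith

/-! ### injectivity of the cylinder parametrization -/

lemma ctr_eval : ctr 0 = (-(π/2), 0) ∧ ctr 1 = (π/2, 0) ∧ ctr 2 = (0, Real.sqrt 3 * π / 2) := by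
  refine ⟨?_, ?_, ?_⟩ <;> norm_num [ctr, Fin.ext_iff]

lemma cylPt_inj {θ z θ' z' : ℝ} (h : cylPt θ z = cylPt θ' z')
    (hθ : θ ∈ Icc (-π) π) (hθ' : θ' ∈ Icc (-π) π) :
    z = z' ∧ (θ = θ' ∨ (θ = -π ∧ θ' = π) ∨ (θ = π ∧ θ' = -π)) := by
  have hc : Real.cos θ = Real.cos θ' := congrArg (fun v => v (0 : Fin 3)) h
  have hs : Real.sin θ = Real.sin θ' := congrArg (fun v => v (1 : Fin 3)) h
  have hz : z = z' := congrArg (fun v => v (2 : Fin 3)) h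
  refine ⟨hz, ?_⟩
  have h1 : Real.cos (θ - θ') = 1 := by
    rw [Real.cos_sub, hc, hs]
    rw [← Real.sin_sq_add_cos_sq θ']
    ring
  obtain ⟨n, hn⟩ := (Real.cos_eq_one_iff _).1 h1
  have hpi := Real.pi_pos
  have h2 : (n:ℝ) * (2*π) ≤ 2*π := by rw [hn]; linarith [hθ.1, hθ.2, hθ'.1, hθ'.2]
  have h3 : -(2*π) ≤ (n:ℝ)*(2*π) := by rw [hn]; linarith [hθ.1, hθ.2, hθ'.1, hθ'.2]
  have hn1 : (-1 : ℤ) ≤ n := by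
    have : (-1:ℝ) ≤ (n:ℝ) := by nlinarith
    exact_mod_cast this
  have hn2 : n ≤ 1 := by
    have : (n:ℝ) ≤ 1 := by nlinarith
    exact_mod_cast this
  interval_cases n
  · right; left
    push_cast at hn
    constructor <;> [linarith [hθ.1, hθ'.2]; linarith [hθ.1, hθ'.2]]
  · left
    push_cast at hn
    linarith
  · right; right
    push_cast at hn
    constructor <;> [linarith [hθ.2, hθ'.1]; linarith [hθ.2, hθ'.1]]

lemma cylPt_pm (z : ℝ) : cylPt (-π) z = cylPt π z := by
  have : (![Real.cos (-π), Real.sin (-π), z]) = ![Real.cos π, Real.sin π, z] := by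
    rw [Real.cos_neg, Real.sin_neg, Real.sin_pi]
    norm_num
  exact congrArg _ this

lemma z_zero_left {p : Pt} (hp : p ∈ T0) (h : p.1 = -π) : p.2 = 0 := by
  obtain ⟨h0, h1, h2⟩ := hp
  rw [h] at h1
  nlinarith [sq3_pos]

lemma z_zero_right {p : Pt} (hp : p ∈ T0) (h : p.1 = π) : p.2 = 0 := by
  obtain ⟨h0, h1, h2⟩ := hp
  rw [h] at h2
  nlinarith [sq3_pos]

lemma corners_mem_T (n : ℕ) : ((-π, (0:ℝ)) : Pt) ∈ T n ∧ (((π:ℝ), (0:ℝ)) : Pt) ∈ T n := by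
  induction n with
  | zero =>
    constructor <;> refine ⟨le_refl _, ?_, ?_⟩ <;> simp <;> nlinarith [sq3_pos, Real.pi_pos]
  | succ n ih =>
    have h0 : f 0 ((-π, (0:ℝ)) : Pt) = ((-π, (0:ℝ)) : Pt) := by
      refine Prod.ext ?_ ?_
      · show (-π)/2 + (ctr 0).1 = -π
        rw [ctr_eval.1]; show (-π)/2 + -(π/2) = -π; ring
      · show (0:ℝ)/2 + (ctr 0).2 = 0
        rw [ctr_eval.1]; show (0:ℝ)/2 + 0 = 0; ring
    have h1 : f 1 (((π:ℝ), (0:ℝ)) : Pt) = (((π:ℝ), (0:ℝ)) : Pt) := by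
      refine Prod.ext ?_ ?_
      · show π/2 + (ctr 1).1 = π
        rw [ctr_eval.2.1]; show π/2 + π/2 = π; ring
      · show (0:ℝ)/2 + (ctr 1).2 = 0
        rw [ctr_eval.2.1]; show (0:ℝ)/2 + 0 = 0; ring
    exact ⟨Set.mem_iUnion.2 ⟨0, _, ih.1, h0⟩, Set.mem_iUnion.2 ⟨1, _, ih.2, h1⟩⟩

lemma corners_mem_S : ((-π, (0:ℝ)) : Pt) ∈ S ∧ (((π:ℝ), (0:ℝ)) : Pt) ∈ S :=
  ⟨Set.mem_iInter.2 fun n => (corners_mem_T n).1, Set.mem_iInter.2 fun n => (corners_mem_T n).2⟩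

lemma Phi_f0 (p : Pt) : Phi (f 0 p) = cylPt (p.1/2 - π/2) (p.2/2) := by
  show cylPt (f 0 p).1 (f 0 p).2 = _
  simp only [f, ctr_eval.1]
  rw [show p.1 / 2 + (-(π/2), (0:ℝ)).1 = p.1/2 - π/2 from by show p.1/2 + -(π/2) = _; ring,
    show p.2 / 2 + (-(π/2), (0:ℝ)).2 = p.2/2 from by show p.2/2 + 0 = _; ring]

lemma Phi_f1 (p : Pt) : Phi (f 1 p) = cylPt (p.1/2 + π/2) (p.2/2) := by
  show cylPt (f 1 p).1 (f 1 p).2 = _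
  simp only [f, ctr_eval.2.1]
  rw [show p.1 / 2 + ((π/2), (0:ℝ)).1 = p.1/2 + π/2 from rfl,
    show p.2 / 2 + ((π/2), (0:ℝ)).2 = p.2/2 from by show p.2/2 + 0 = _; ring]

lemma Phi_f2 (p : Pt) : Phi (f 2 p) = cylPt (p.1/2) (p.2/2 + Real.sqrt 3 * π / 2) := by
  show cylPt (f 2 p).1 (f 2 p).2 = _
  simp only [f, ctr_eval.2.2]
  rw [show p.1 / 2 + ((0:ℝ), Real.sqrt 3 * π / 2).1 = p.1/2 from by show p.1/2 + 0 = _; ring]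

/-! ### the dimension of the image -/

lemma f2_image_T0_strip : f 2 '' T0 ⊆ strip := by
  rintro x ⟨p, hp, rfl⟩
  have hθ := T0_mem_theta hp
  show |(f 2 p).1| ≤ π/2
  simp only [f, ctr_eval.2.2]
  rw [add_zero, abs_le]
  constructor <;> [linarith [hθ.1]; linarith [hθ.2]]

lemma f2_S_subset_S : f 2 '' S ⊆ S := by
  rintro x ⟨p, hp, rfl⟩
  refine Set.mem_iInter.2 fun n => ?_
  cases n with
  | zero => exact f_mem_T0 (S_subset_T 0 hp)
  | succ n => exact Set.mem_iUnion.2 ⟨2, p, S_subset_T n hp, rfl⟩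

lemma anti_f2 : AntilipschitzWith 2 (f 2) := by
  apply AntilipschitzWith.of_le_mul_dist
  intro x y
  rw [dist_f]
  push_cast
  linarith [dist_nonneg (x := x) (y := y)]

lemma anti_Phi_sub : AntilipschitzWith 2 (fun x : strip => Phi x.val) := by
  apply AntilipschitzWith.of_le_mul_dist
  intro x y
  have h := anti_Phi_strip x.val x.2 y.val y.2
  rw [Subtype.dist_eq]
  push_cast
  exact h

lemma dimH_Phi_S : dimH (Phi '' S) = ENNReal.ofReal dd := by
  apply le_antisymm
  · exact (lip_Phi.dimH_image_le S).trans_eq dimH_S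
  · rw [← dimH_S]
    have hsub : f 2 '' S ⊆ strip := (Set.image_mono (S_subset_T 0)).trans f2_image_T0_strip
    set A : Set strip := Subtype.val ⁻¹' (f 2 '' S) with hA
    have hval : Subtype.val '' A = f 2 '' S := by
      rw [hA, Subtype.image_preimage_coe]
      exact Set.inter_eq_self_of_subset_right hsub
    calc dimH S ≤ dimH (f 2 '' S) := anti_f2.le_dimH_image S
      _ = dimH A := by rw [← hval]; exact isometry_subtype_coe.dimH_image A
      _ ≤ dimH ((fun x : strip => Phi x.val) '' A) := anti_Phi_sub.le_dimH_image A
      _ = dimH (Phi '' (f 2 '' S)) := by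
          rw [show (fun x : strip => Phi x.val) = Phi ∘ Subtype.val from rfl,
            Set.image_comp, hval]
      _ ≤ dimH (Phi '' S) := dimH_mono (Set.image_mono f2_S_subset_S)

/-! ### identification of the sets Eₙ -/

lemma E0_eq :
    ({p | ∃ θ z : ℝ, θ ∈ Icc (-π) 0 ∧
        z ∈ Icc 0 (Real.sqrt 3 * θ + Real.sqrt 3 * π) ∧ p = cylPt θ z} ∪
      {p | ∃ θ z : ℝ, θ ∈ Icc 0 π ∧
        z ∈ Icc 0 (-(Real.sqrt 3) * θ + Real.sqrt 3 * π) ∧ p = cylPt θ z})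
    = Phi '' T0 := by
  have s3 := sq3_pos
  ext p
  constructor
  · rintro (⟨θ, z, hθ, hz, rfl⟩ | ⟨θ, z, hθ, hz, rfl⟩)
    · exact ⟨(θ, z), ⟨hz.1, hz.2, by nlinarith [hθ.2, hz.2]⟩, rfl⟩
    · exact ⟨(θ, z), ⟨hz.1, by nlinarith [hθ.1, hz.2], by nlinarith [hz.2]⟩, rfl⟩
  · rintro ⟨x, hx, rfl⟩
    obtain ⟨h0, h1, h2⟩ := hx
    have hθ := T0_mem_theta ⟨h0, h1, h2⟩
    rcases le_or_gt x.1 0 with hle | hlt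
    · exact Or.inl ⟨x.1, x.2, ⟨hθ.1, hle⟩, ⟨h0, h1⟩, rfl⟩
    · exact Or.inr ⟨x.1, x.2, ⟨hlt.le, hθ.2⟩, ⟨h0, by nlinarith [h2]⟩, rfl⟩

lemma rep_mem {A : Set Pt} (hA : A ⊆ T0) (hc1 : ((-π, (0:ℝ)) : Pt) ∈ A)
    (hc2 : (((π:ℝ), (0:ℝ)) : Pt) ∈ A) {a : Pt} (ha : a ∈ A) {θ z : ℝ}
    (hθ : θ ∈ Icc (-π) π) (heq : Phi a = cylPt θ z) : ((θ, z) : Pt) ∈ A := by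
  have ha1 : a.1 ∈ Icc (-π) π := ⟨(T0_mem_theta (hA ha)).1, (T0_mem_theta (hA ha)).2⟩
  obtain ⟨hz, hc⟩ := cylPt_inj (show cylPt a.1 a.2 = cylPt θ z from heq) ha1 hθ
  rcases hc with h | ⟨h1, h2⟩ | ⟨h1, h2⟩
  · rw [← h, ← hz]; exact ha
  · rw [h2, ← hz, z_zero_left (hA ha) h1]; exact hc2
  · rw [h2, ← hz, z_zero_right (hA ha) h1]; exact hc1

lemma step_eq (R : Fin 3 → EuclideanSpace ℝ (Fin 3) → Set (EuclideanSpace ℝ (Fin 3)))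
    (hR₁ : ∀ p, R 0 p = {q | ∃ θ z : ℝ, θ ∈ Icc (-π) π ∧
      p = cylPt θ z ∧ q = cylPt (θ / 2 - π / 2) (z / 2)})
    (hR₂ : ∀ p, R 1 p = {q | ∃ θ z : ℝ, θ ∈ Icc (-π) π ∧
      p = cylPt θ z ∧ q = cylPt (θ / 2 + π / 2) (z / 2)})
    (hR₃ : ∀ p, R 2 p = {q | ∃ θ z : ℝ, θ ∈ Icc (-π) π ∧
      p = cylPt θ z ∧ q = cylPt (θ / 2) (z / 2 + Real.sqrt 3 * π / 2)})
    {A : Set Pt} (hA : A ⊆ T0) (hc1 : ((-π, (0:ℝ)) : Pt) ∈ A)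
    (hc2 : (((π:ℝ), (0:ℝ)) : Pt) ∈ A) :
    (⋃ t : Fin 3, relImage (R t) (Phi '' A)) = Phi '' (⋃ t : Fin 3, f t '' A) := by
  ext q
  rw [Set.mem_iUnion]
  constructor
  · rintro ⟨t, hq⟩
    simp only [relImage, Set.mem_iUnion] at hq
    obtain ⟨p, ⟨⟨a, haA, rfl⟩, hq⟩⟩ := hq
    have hmem : ∀ θ z : ℝ, θ ∈ Icc (-π) π → Phi a = cylPt θ z → ((θ,z) : Pt) ∈ A :=
      fun θ z h1 h2 => rep_mem hA hc1 hc2 haA h1 h2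
    fin_cases t
    · replace hq : q ∈ R 0 (Phi a) := hq
      rw [hR₁] at hq
      obtain ⟨θ, z, hθ, hpa, rfl⟩ := hq
      exact ⟨f 0 ((θ, z) : Pt), Set.mem_iUnion.2 ⟨0, _, hmem θ z hθ hpa, rfl⟩,
        Phi_f0 ((θ, z) : Pt)⟩
    · replace hq : q ∈ R 1 (Phi a) := hq
      rw [hR₂] at hq
      obtain ⟨θ, z, hθ, hpa, rfl⟩ := hq
      exact ⟨f 1 ((θ, z) : Pt), Set.mem_iUnion.2 ⟨1, _, hmem θ z hθ hpa, rfl⟩,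
        Phi_f1 ((θ, z) : Pt)⟩
    · replace hq : q ∈ R 2 (Phi a) := hq
      rw [hR₃] at hq
      obtain ⟨θ, z, hθ, hpa, rfl⟩ := hq
      exact ⟨f 2 ((θ, z) : Pt), Set.mem_iUnion.2 ⟨2, _, hmem θ z hθ hpa, rfl⟩,
        Phi_f2 ((θ, z) : Pt)⟩
  · rintro ⟨x, hx, rfl⟩
    obtain ⟨t, a, haA, rfl⟩ := Set.mem_iUnion.1 hx
    have haI : a.1 ∈ Icc (-π) π := ⟨(T0_mem_theta (hA haA)).1, (T0_mem_theta (hA haA)).2⟩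
    refine ⟨t, ?_⟩
    simp only [relImage, Set.mem_iUnion]
    refine ⟨Phi a, ⟨⟨a, haA, rfl⟩, ?_⟩⟩
    fin_cases t
    · exact show Phi (f 0 a) ∈ R 0 (Phi a) by
        rw [hR₁]; exact ⟨a.1, a.2, haI, rfl, Phi_f0 a⟩
    · exact show Phi (f 1 a) ∈ R 1 (Phi a) by
        rw [hR₂]; exact ⟨a.1, a.2, haI, rfl, Phi_f1 a⟩
    · exact show Phi (f 2 a) ∈ R 2 (Phi a) by
        rw [hR₃]; exact ⟨a.1, a.2, haI, rfl, Phi_f2 a⟩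

lemma iInter_eq (E : ℕ → Set (EuclideanSpace ℝ (Fin 3))) (hE : ∀ n, E n = Phi '' T n) :
    (⋂ n, E n) = Phi '' S := by
  ext q
  constructor
  · intro hq
    by_cases hcase : q = Phi ((-π, (0:ℝ)) : Pt)
    · exact hcase ▸ ⟨_, corners_mem_S.1, rfl⟩
    · have hq0 : q ∈ Phi '' T 0 := (hE 0) ▸ (Set.mem_iInter.1 hq 0)
      obtain ⟨x, hx0, rfl⟩ := hq0
      have hxI : x.1 ∈ Icc (-π) π := ⟨(T0_mem_theta hx0).1, (T0_mem_theta hx0).2⟩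
      refine ⟨x, Set.mem_iInter.2 fun n => ?_, rfl⟩
      have hqn : Phi x ∈ Phi '' T n := (hE n) ▸ (Set.mem_iInter.1 hq n)
      obtain ⟨y, hyn, hyq⟩ := hqn
      have hyI : y.1 ∈ Icc (-π) π :=
        ⟨(T0_mem_theta (T_subset_T0 n hyn)).1, (T0_mem_theta (T_subset_T0 n hyn)).2⟩
      obtain ⟨hz, hc⟩ := cylPt_inj (show cylPt y.1 y.2 = cylPt x.1 x.2 from hyq) hyI hxI
      rcases hc with h | ⟨h1, h2⟩ | ⟨h1, h2⟩
      · have : y = x := Prod.ext h hz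
        rwa [this] at hyn
      · exfalso
        apply hcase
        have hx2 : x.2 = 0 := by rw [← hz]; exact z_zero_left (T_subset_T0 n hyn) h1
        have hxx : x = (((π:ℝ), (0:ℝ)) : Pt) := Prod.ext h2 hx2
        rw [hxx]
        show cylPt π 0 = cylPt (-π) 0
        exact (cylPt_pm 0).symm
      · exfalso
        apply hcase
        have hx2 : x.2 = 0 := by rw [← hz]; exact z_zero_right (T_subset_T0 n hyn) h1
        have hxx : x = ((-π, (0:ℝ)) : Pt) := Prod.ext h2 hx2
        rw [hxx]
  · rintro ⟨x, hxS, rfl⟩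
    exact Set.mem_iInter.2 fun n => (hE n) ▸ ⟨x, Set.mem_iInter.1 hxS n, rfl⟩

end CG
end

/-- Example 4.7 of the paper.  On the triangular region
`E₀ = E₀¹ ∪ E₀²` of the cylinder (realized isometrically—up to bi-Lipschitz
equivalence, which does not change Hausdorff dimension—as a subset of `ℝ³`), with the
Sierpinski-gasket-type relations `R₁, R₂, R₃` given by half-angle maps (single-valued
except at `(−1,0,0)`, where the two representatives `θ = ±π` give two values), the
attractor `K = ⋂_n E_n` has Hausdorff dimension `log 3 / log 2`. -/
theorem hausdorff_dimension_cylinder_gasket_example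
    (R : Fin 3 → EuclideanSpace ℝ (Fin 3) → Set (EuclideanSpace ℝ (Fin 3)))
    (hR₁ : ∀ p, R 0 p = {q | ∃ θ z : ℝ, θ ∈ Icc (-π) π ∧
      p = cylPt θ z ∧ q = cylPt (θ / 2 - π / 2) (z / 2)})
    (hR₂ : ∀ p, R 1 p = {q | ∃ θ z : ℝ, θ ∈ Icc (-π) π ∧
      p = cylPt θ z ∧ q = cylPt (θ / 2 + π / 2) (z / 2)})
    (hR₃ : ∀ p, R 2 p = {q | ∃ θ z : ℝ, θ ∈ Icc (-π) π ∧
      p = cylPt θ z ∧ q = cylPt (θ / 2) (z / 2 + Real.sqrt 3 * π / 2)})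
    (E : ℕ → Set (EuclideanSpace ℝ (Fin 3)))
    (hE0 : E 0 =
      {p | ∃ θ z : ℝ, θ ∈ Icc (-π) 0 ∧
        z ∈ Icc 0 (Real.sqrt 3 * θ + Real.sqrt 3 * π) ∧ p = cylPt θ z} ∪
      {p | ∃ θ z : ℝ, θ ∈ Icc 0 π ∧
        z ∈ Icc 0 (-(Real.sqrt 3) * θ + Real.sqrt 3 * π) ∧ p = cylPt θ z})
    (hEsucc : ∀ n : ℕ, E (n + 1) = ⋃ t : Fin 3, relImage (R t) (E n)) :
    dimH (⋂ n : ℕ, E n) = ENNReal.ofReal (Real.log 3 / Real.log 2) := by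
  have hE : ∀ n, E n = CG.Phi '' CG.T n := by
    intro n
    induction n with
    | zero => rw [hE0]; exact CG.E0_eq
    | succ n ih =>
      rw [hEsucc n, ih]
      exact CG.step_eq R hR₁ hR₂ hR₃ (CG.T_subset_T0 n) (CG.corners_mem_T n).1
        (CG.corners_mem_T n).2
  rw [CG.iInter_eq E hE]
  exact CG.dimH_Phi_S
end
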